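/- arXiv:2310.08461 — 3 statements merged into one kernel-verified Lean document; each statement's English description precedes it below -/
import Mathlib

section
/- With Ω, T, p, q as above, for every input x, every 1 ≤ t ≤ T, and every function δ : Ω^t → [−1/2, 1/2] (extended by δ(y) = 0 for sequences y of length ≠ t): E_{y∼M(x, ∅, P^{t−1}Q)}[δ(y)] ≥ E_{y∼M(x, ∅, Q^t)}[δ(y)] − Σ_{k=1}^{t−1} E_k(x), where E_k(x) = E_{y∼q_{≤T}(·|x)}[ 1{k ≤ |y|} · D_TVD(p(·|x,y_{<k}), q(·|x,y_{<k})) ]. -/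
open Finset

/-- Total variation distance between two distributions on a finite set. -/
noncomputable def tvd {Ω : Type*} [Fintype Ω] (P Q : Ω → ℝ) : ℝ :=
  (1 / 2) * ∑ c, |P c - Q c|

/-- `IsDist P`: `P` is a probability distribution on the finite set `Ω`. -/
def IsDist {Ω : Type*} [Fintype Ω] (P : Ω → ℝ) : Prop :=
  (∀ c, 0 ≤ P c) ∧ ∑ c, P c = 1

/-- A next-token model: for every input `x` and every prefix, a next-token distribution. -/
def IsModel {Ω ι : Type*} [Fintype Ω] (p : ι → List Ω → Ω → ℝ) : Prop :=
  ∀ x pre, IsDist (p x pre)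

/-- `Stopped eos T y`: `y` is a completed output sequence for horizon `T`: it is nonempty,
has length at most `T`, contains the end-of-sequence token at no position except possibly
the last one, and either ends with `eos` or has length exactly `T`. -/
def Stopped {Ω : Type*} [DecidableEq Ω] (eos : Ω) (T : ℕ) (y : List Ω) : Prop :=
  y ≠ [] ∧ y.length ≤ T ∧ eos ∉ y.dropLast ∧ (y.getLast? = some eos ∨ y.length = T)

open Classical in
/-- Probability that autoregressive sampling — where the next-token distribution used to
sample the `(t+1)`-st token given the length-`t` prefix `pre` is `ms t pre`, with horizon `T`
and end-of-sequence token `eos` — outputs exactly the sequence `y`. -/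
noncomputable def seqProb {Ω : Type*} [Fintype Ω] [DecidableEq Ω] (eos : Ω)
    (ms : ℕ → List Ω → Ω → ℝ) (T : ℕ) (y : List Ω) : ℝ :=
  if Stopped eos T y then ∏ t ∈ Finset.range y.length, ms t (y.take t) (y.getD t eos) else 0

/-- Expectation of `f` under the induced distribution over output sequences. -/
noncomputable def seqExp {Ω : Type*} [Fintype Ω] [DecidableEq Ω] (eos : Ω)
    (ms : ℕ → List Ω → Ω → ℝ) (T : ℕ) (f : List Ω → ℝ) : ℝ :=
  ∑ n ∈ Finset.Icc 1 T, ∑ v : Fin n → Ω, seqProb eos ms T (List.ofFn v) * f (List.ofFn v)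

/-- Expectation under `p_{≤T}(·|x)`, the output-sequence distribution of the
autoregressive model with next-token distributions `p`. -/
noncomputable def modelExp {Ω ι : Type*} [Fintype Ω] [DecidableEq Ω] (eos : Ω)
    (p : ι → List Ω → Ω → ℝ) (x : ι) (T : ℕ) (f : List Ω → ℝ) : ℝ :=
  seqExp eos (fun _ pre => p x pre) T f

/-- Expectation under the mixed-model sequence distribution `M(x, ∅, z)`, where the letter
`z_t` (`true` = letter `P`, i.e. target model `p`; `false` = letter `Q`, i.e. draft model `q`)
selects the model used to sample the `t`-th token, with horizon `|z|` and empty prefix. -/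
noncomputable def mixExp {Ω ι : Type*} [Fintype Ω] [DecidableEq Ω] (eos : Ω)
    (p q : ι → List Ω → Ω → ℝ) (x : ι) (z : List Bool) (f : List Ω → ℝ) : ℝ :=
  seqExp eos (fun t pre => if z.getD t true then p x pre else q x pre) z.length f

/-- `Σ_{t=1}^{|y|} D_TVD(p(·|x, y_{<t}), q(·|x, y_{<t}))`. -/
noncomputable def totalLoss {Ω ι : Type*} [Fintype Ω] (p q : ι → List Ω → Ω → ℝ)
    (x : ι) (y : List Ω) : ℝ :=
  ∑ t ∈ Finset.range y.length, tvd (p x (y.take t)) (q x (y.take t))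

/-- `1{t ≤ |y|} · D_TVD(p(·|x, y_{<t}), q(·|x, y_{<t}))` for a (1-indexed) position `t`. -/
noncomputable def stepLoss {Ω ι : Type*} [Fintype Ω] (p q : ι → List Ω → Ω → ℝ)
    (x : ι) (t : ℕ) (y : List Ω) : ℝ :=
  if t ≤ y.length then tvd (p x (y.take (t - 1))) (q x (y.take (t - 1))) else 0

/-- Expected output length `L_p(x) = E_{y∼p_{≤T}(·|x)}[|y|]` of the target model. -/
noncomputable def Lp {Ω ι : Type*} [Fintype Ω] [DecidableEq Ω] (eos : Ω)
    (p : ι → List Ω → Ω → ℝ) (x : ι) (T : ℕ) : ℝ :=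
  modelExp eos p x T (fun y => (y.length : ℝ))

/-- Sequence-level acceptance rate
`α(x) = 1 − E_{y∼p_{≤T}(·|x)}[Σ_{t=1}^{|y|} D_TVD(p(·|x,y_{<t}), q(·|x,y_{<t}))] / L_p(x)`. -/
noncomputable def acceptRate {Ω ι : Type*} [Fintype Ω] [DecidableEq Ω] (eos : Ω)
    (p q : ι → List Ω → Ω → ℝ) (x : ι) (T : ℕ) : ℝ :=
  1 - modelExp eos p x T (totalLoss p q x) / Lp eos p x T

/-- On-policy distillation loss
`ε(x) = E_{y∼q_{≤T}(·|x)}[(1/|y|) Σ_{t=1}^{|y|} D_TVD(p(·|x,y_{<t}), q(·|x,y_{<t}))]`. -/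
noncomputable def onPolicyLoss {Ω ι : Type*} [Fintype Ω] [DecidableEq Ω] (eos : Ω)
    (p q : ι → List Ω → Ω → ℝ) (x : ι) (T : ℕ) : ℝ :=
  modelExp eos q x T (fun y => (1 / (y.length : ℝ)) * totalLoss p q x y)

/-- `A_t(x) = E_{y∼p_{≤T}(·|x)}[1{t ≤ |y|} · D_TVD(p(·|x,y_{<t}), q(·|x,y_{<t}))]`. -/
noncomputable def Aterm {Ω ι : Type*} [Fintype Ω] [DecidableEq Ω] (eos : Ω)
    (p q : ι → List Ω → Ω → ℝ) (x : ι) (T t : ℕ) : ℝ :=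
  modelExp eos p x T (stepLoss p q x t)

/-- `E_t(x) = E_{y∼q_{≤T}(·|x)}[1{t ≤ |y|} · D_TVD(p(·|x,y_{<t}), q(·|x,y_{<t}))]`. -/
noncomputable def Eterm {Ω ι : Type*} [Fintype Ω] [DecidableEq Ω] (eos : Ω)
    (p q : ι → List Ω → Ω → ℝ) (x : ι) (T t : ℕ) : ℝ :=
  modelExp eos q x T (stepLoss p q x t)

section Aux

set_option linter.unusedSectionVars false
variable {Ω : Type*} [Fintype Ω] [DecidableEq Ω] (eos : Ω)

lemma tvd_nonneg (P Q : Ω → ℝ) : 0 ≤ tvd P Q := by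
  unfold tvd
  positivity

lemma sum_Icc_one (T : ℕ) (f : ℕ → ℝ) :
    ∑ n ∈ Finset.Icc 1 T, f n = ∑ j ∈ Finset.range T, f (1 + j) := by
  rw [← Finset.Ico_add_one_right_eq_Icc, Finset.sum_Ico_eq_sum_range]; simp

lemma seqProb_nonneg (ms : ℕ → List Ω → Ω → ℝ) (hms : ∀ j pre, IsDist (ms j pre))
    (T : ℕ) (y : List Ω) : 0 ≤ seqProb eos ms T y := by
  unfold seqProb
  split_ifs
  · exact Finset.prod_nonneg fun t _ => (hms t _).1 _
  · exact le_refl 0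

lemma seqExp_nonneg (ms : ℕ → List Ω → Ω → ℝ) (hms : ∀ j pre, IsDist (ms j pre))
    (T : ℕ) (f : List Ω → ℝ) (hf : ∀ y, 0 ≤ f y) : 0 ≤ seqExp eos ms T f := by
  unfold seqExp
  refine Finset.sum_nonneg fun n _ => Finset.sum_nonneg fun v _ => ?_
  exact mul_nonneg (seqProb_nonneg eos ms hms T _) (hf _)

lemma seqProb_congr {ms₁ ms₂ : ℕ → List Ω → Ω → ℝ} (T : ℕ)
    (h : ∀ j < T, ∀ pre, ms₁ j pre = ms₂ j pre) (y : List Ω) :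
    seqProb eos ms₁ T y = seqProb eos ms₂ T y := by
  unfold seqProb
  split_ifs with hs
  · exact Finset.prod_congr rfl fun t ht => by
      rw [h t (lt_of_lt_of_le (Finset.mem_range.mp ht) hs.2.1)]
  · rfl

lemma seqExp_congr {ms₁ ms₂ : ℕ → List Ω → Ω → ℝ} (T : ℕ)
    (h : ∀ j < T, ∀ pre, ms₁ j pre = ms₂ j pre) (f : List Ω → ℝ) :
    seqExp eos ms₁ T f = seqExp eos ms₂ T f := by
  unfold seqExp
  refine Finset.sum_congr rfl fun n _ => Finset.sum_congr rfl fun v _ => ?_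
  rw [seqProb_congr eos T h]

lemma seqExp_congr_fn {f g : List Ω → ℝ} (ms : ℕ → List Ω → Ω → ℝ) (T : ℕ)
    (h : ∀ y : List Ω, y ≠ [] → f y = g y) :
    seqExp eos ms T f = seqExp eos ms T g := by
  unfold seqExp
  refine Finset.sum_congr rfl fun n hn => Finset.sum_congr rfl fun v _ => ?_
  rw [h]
  intro hy
  have hn1 : 1 ≤ n := (Finset.mem_Icc.mp hn).1
  have : (List.ofFn v).length = n := List.length_ofFn
  rw [hy] at this
  simp at this
  omega

lemma seqExp_const_mul (ms : ℕ → List Ω → Ω → ℝ) (T : ℕ) (a : ℝ) (f : List Ω → ℝ) :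
    seqExp eos ms T (fun y => a * f y) = a * seqExp eos ms T f := by
  unfold seqExp
  rw [Finset.mul_sum]
  refine Finset.sum_congr rfl fun n _ => ?_
  rw [Finset.mul_sum]
  refine Finset.sum_congr rfl fun v _ => by ring


lemma stopped_singleton (T : ℕ) (hT : 1 ≤ T) (c : Ω) :
    Stopped eos T [c] ↔ (c = eos ∨ T = 1) := by
  unfold Stopped
  simp [hT]
  constructor
  · rintro (h | h)
    · exact Or.inl h
    · exact Or.inr h.symm
  · rintro (h | h)
    · exact Or.inl h
    · exact Or.inr h.symm

lemma stopped_cons (T : ℕ) (hT : 1 ≤ T) (c : Ω) (l : List Ω) (hl : l ≠ []) :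
    Stopped eos T (c :: l) ↔ (c ≠ eos ∧ Stopped eos (T - 1) l) := by
  obtain ⟨b, l', rfl⟩ := List.exists_cons_of_ne_nil hl
  unfold Stopped
  rw [List.dropLast_cons_of_ne_nil (by simp), List.getLast?_cons_cons]
  simp only [List.mem_cons, List.length_cons, ne_eq, reduceCtorEq, not_false_eq_true, true_and,
    List.cons_ne_nil]
  constructor
  · rintro ⟨hlen, hdrop, hlast⟩
    refine ⟨fun h => hdrop (Or.inl h.symm), ?_, fun h => hdrop (Or.inr h), ?_⟩
    · omega
    · rcases hlast with h | h
      · exact Or.inl h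
      · exact Or.inr (by omega)
  · rintro ⟨hc, hlen, hdrop, hlast⟩
    refine ⟨by omega, ?_, ?_⟩
    · rintro (h | h)
      · exact hc h.symm
      · exact hdrop h
    · rcases hlast with h | h
      · exact Or.inl h
      · exact Or.inr (by omega)

lemma seqProb_singleton (ms : ℕ → List Ω → Ω → ℝ) (T : ℕ) (hT : 1 ≤ T) (c : Ω) :
    seqProb eos ms T [c] = if c = eos ∨ T = 1 then ms 0 [] c else 0 := by
  unfold seqProb
  by_cases h : c = eos ∨ T = 1
  · rw [if_pos ((stopped_singleton eos T hT c).mpr h), if_pos h]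
    simp
  · rw [if_neg (fun hs => h ((stopped_singleton eos T hT c).mp hs)), if_neg h]

lemma seqProb_cons (ms : ℕ → List Ω → Ω → ℝ) (T : ℕ) (hT : 1 ≤ T) (c : Ω) (l : List Ω)
    (hl : l ≠ []) :
    seqProb eos ms T (c :: l) =
      if c = eos then 0
      else ms 0 [] c * seqProb eos (fun j pre => ms (j + 1) (c :: pre)) (T - 1) l := by
  unfold seqProb
  by_cases hc : c = eos
  · rw [if_pos hc, if_neg]
    intro hs
    exact ((stopped_cons eos T hT c l hl).mp hs).1 hc
  · rw [if_neg hc]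
    by_cases hs : Stopped eos (T - 1) l
    · rw [if_pos ((stopped_cons eos T hT c l hl).mpr ⟨hc, hs⟩), if_pos hs]
      rw [List.length_cons, Finset.prod_range_succ' (fun t => ms t ((c :: l).take t) ((c :: l).getD t eos))]
      simp only [List.take_zero, List.getD_cons_zero, List.take_succ_cons, List.getD_cons_succ]
      ring
    · rw [if_neg (fun h => hs ((stopped_cons eos T hT c l hl).mp h).2), if_neg hs, mul_zero]


lemma sum_ofFn_succ (m : ℕ) (g : List Ω → ℝ) :
    ∑ v : Fin (m + 1) → Ω, g (List.ofFn v) = ∑ c : Ω, ∑ w : Fin m → Ω, g (c :: List.ofFn w) := by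
  rw [← Equiv.sum_comp (Fin.consEquiv fun _ => Ω) (fun v => g (List.ofFn v)),
    Fintype.sum_prod_type]
  refine Finset.sum_congr rfl fun c _ => Finset.sum_congr rfl fun w _ => ?_
  congr 1
  rw [List.ofFn_succ]
  simp [Fin.consEquiv, Fin.cons_zero, Fin.cons_succ]

lemma seqExp_zero (ms : ℕ → List Ω → Ω → ℝ) (f : List Ω → ℝ) : seqExp eos ms 0 f = 0 := by
  unfold seqExp
  simp

lemma seqExp_rec (ms : ℕ → List Ω → Ω → ℝ) (T : ℕ) (hT : 1 ≤ T) (f : List Ω → ℝ) :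
    seqExp eos ms T f = ∑ c : Ω, ms 0 [] c *
      (if c = eos then f [c] else if T = 1 then f [c]
       else seqExp eos (fun j pre => ms (j + 1) (c :: pre)) (T - 1) (fun l => f (c :: l))) := by
  obtain ⟨T', rfl⟩ : ∃ T', T = T' + 1 := ⟨T - 1, by omega⟩
  set S : ℕ → ℝ := fun n => ∑ v : Fin n → Ω, seqProb eos ms (T' + 1) (List.ofFn v) * f (List.ofFn v) with hS
  have h0 : seqExp eos ms (T' + 1) f = ∑ j ∈ Finset.range (T' + 1), S (j + 1) := by
    unfold seqExp
    rw [sum_Icc_one]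
    exact Finset.sum_congr rfl fun j _ => by rw [Nat.add_comm]
  have hS1 : S 1 = ∑ c : Ω, (if c = eos ∨ T' + 1 = 1 then ms 0 [] c else 0) * f [c] := by
    have hrw : S 1 = ∑ v : Fin (0 + 1) → Ω, seqProb eos ms (T' + 1) (List.ofFn v) * f (List.ofFn v) := rfl
    rw [hrw, sum_ofFn_succ 0 (fun y => seqProb eos ms (T' + 1) y * f y)]
    refine Finset.sum_congr rfl fun c _ => ?_
    simp only [List.ofFn_zero]
    rw [Finset.sum_const, Finset.card_univ]
    simp [seqProb_singleton eos ms (T' + 1) (by omega) c]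
  have hSj : ∀ j : ℕ, S (j + 1 + 1) = ∑ c : Ω, (if c = eos then 0 else ms 0 [] c *
      (∑ w : Fin (j + 1) → Ω, seqProb eos (fun j pre => ms (j + 1) (c :: pre)) T' (List.ofFn w)
        * f (c :: List.ofFn w))) := by
    intro j
    have hrw : S (j + 1 + 1) = ∑ v : Fin (j + 1 + 1) → Ω, seqProb eos ms (T' + 1) (List.ofFn v) * f (List.ofFn v) := rfl
    rw [hrw, sum_ofFn_succ (j + 1) (fun y => seqProb eos ms (T' + 1) y * f y)]
    refine Finset.sum_congr rfl fun c _ => ?_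
    by_cases hc : c = eos
    · simp only [if_pos hc]
      refine Finset.sum_eq_zero fun w _ => ?_
      rw [seqProb_cons eos ms (T' + 1) (by omega) c _ (by simp), if_pos hc, zero_mul]
    · simp only [if_neg hc, Finset.mul_sum]
      refine Finset.sum_congr rfl fun w _ => ?_
      rw [seqProb_cons eos ms (T' + 1) (by omega) c _ (by simp), if_neg hc]
      simp only [Nat.add_sub_cancel]
      ring
  rw [h0, Finset.sum_range_succ' (fun j => S (j + 1)) T', hS1]
  have hsum : ∑ j ∈ Finset.range T', S (j + 1 + 1) =
      ∑ c : Ω, (if c = eos then 0 else ms 0 [] c *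
        seqExp eos (fun j pre => ms (j + 1) (c :: pre)) T' (fun l => f (c :: l))) := by
    rw [Finset.sum_congr rfl fun j _ => hSj j, Finset.sum_comm]
    refine Finset.sum_congr rfl fun c _ => ?_
    by_cases hc : c = eos
    · simp [hc]
    · simp only [if_neg hc, ← Finset.mul_sum]
      congr 1
      unfold seqExp
      rw [sum_Icc_one]
      exact (Finset.sum_congr rfl fun j _ => by rw [Nat.add_comm]).symm
  rw [hsum, ← Finset.sum_add_distrib]
  refine Finset.sum_congr rfl fun c _ => ?_
  by_cases hc : c = eos
  · simp [hc]
  · simp only [if_neg hc]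
    by_cases hT' : T' = 0
    · subst hT'
      simp [seqExp_zero]
    · rw [if_neg (by omega : ¬ T' + 1 = 1), if_neg (by push_neg; exact ⟨hc, by omega⟩ : ¬ (c = eos ∨ T' + 1 = 1))]
      simp only [Nat.add_sub_cancel]
      ring

lemma seqExp_one (T : ℕ) (hT : 1 ≤ T) : ∀ (ms : ℕ → List Ω → Ω → ℝ),
    (∀ j pre, IsDist (ms j pre)) → seqExp eos ms T (fun _ => 1) = 1 := by
  induction T, hT using Nat.le_induction with
  | base =>
    intro ms hms
    rw [seqExp_rec eos ms 1 le_rfl]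
    simp [(hms 0 []).2]
  | succ T hT ih =>
    intro ms hms
    rw [seqExp_rec eos ms (T + 1) (by omega)]
    have : ∀ c : Ω, (if c = eos then (1:ℝ) else if T + 1 = 1 then 1
        else seqExp eos (fun j pre => ms (j + 1) (c :: pre)) (T + 1 - 1) (fun _ => 1)) = 1 := by
      intro c
      by_cases hc : c = eos
      · simp [hc]
      · rw [if_neg hc, if_neg (by omega : ¬ T + 1 = 1)]
        simpa using ih (fun j pre => ms (j + 1) (c :: pre)) (fun j pre => hms (j + 1) (c :: pre))
    simp only [this, mul_one]
    exact (hms 0 []).2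

lemma seqExp_abs_le (B : ℝ) (hB : 0 ≤ B) : ∀ (T : ℕ) (ms : ℕ → List Ω → Ω → ℝ),
    (∀ j pre, IsDist (ms j pre)) → ∀ f : List Ω → ℝ, (∀ y, |f y| ≤ B) →
    |seqExp eos ms T f| ≤ B := by
  intro T
  induction T with
  | zero => intro ms _ f _; rw [seqExp_zero]; simpa using hB
  | succ T ih =>
    intro ms hms f hf
    rw [seqExp_rec eos ms (T + 1) (by omega)]
    calc |∑ c : Ω, ms 0 [] c * _| ≤ ∑ c : Ω, |ms 0 [] c * (if c = eos then f [c] else if T + 1 = 1 then f [c]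
          else seqExp eos (fun j pre => ms (j + 1) (c :: pre)) (T + 1 - 1) (fun l => f (c :: l)))| :=
        Finset.abs_sum_le_sum_abs _ _
      _ ≤ ∑ c : Ω, ms 0 [] c * B := by
        refine Finset.sum_le_sum fun c _ => ?_
        rw [abs_mul, abs_of_nonneg ((hms 0 []).1 c)]
        refine mul_le_mul_of_nonneg_left ?_ ((hms 0 []).1 c)
        by_cases hc : c = eos
        · simpa [hc] using hf [c]
        · rw [if_neg hc]
          by_cases hT1 : T + 1 = 1
          · simpa [hT1] using hf [c]
          · rw [if_neg hT1]
            exact ih (fun j pre => ms (j + 1) (c :: pre)) (fun j pre => hms (j + 1) (c :: pre))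
              (fun l => f (c :: l)) (fun l => hf (c :: l))
      _ = B := by rw [← Finset.sum_mul, (hms 0 []).2, one_mul]

noncomputable def sLoss (P Q : List Ω → Ω → ℝ) (k : ℕ) (y : List Ω) : ℝ :=
  if k ≤ y.length then tvd (P (y.take (k - 1))) (Q (y.take (k - 1))) else 0

lemma sLoss_one (P Q : List Ω → Ω → ℝ) (y : List Ω) (hy : y ≠ []) :
    sLoss P Q 1 y = tvd (P []) (Q []) * 1 := by
  unfold sLoss
  rw [if_pos (by simpa [Nat.one_le_iff_ne_zero, List.length_eq_zero_iff] using hy), mul_one]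
  simp

lemma sLoss_cons (P Q : List Ω → Ω → ℝ) (k : ℕ) (hk : 1 ≤ k) (c : Ω) (l : List Ω) :
    sLoss P Q (k + 1) (c :: l) =
      sLoss (fun pre => P (c :: pre)) (fun pre => Q (c :: pre)) k l := by
  unfold sLoss
  have h2 : (c :: l).take (k + 1 - 1) = c :: l.take (k - 1) := by
    obtain ⟨k', rfl⟩ : ∃ k', k = k' + 1 := ⟨k - 1, by omega⟩
    simp
  by_cases hkl : k ≤ l.length
  · rw [if_pos (by simp; omega), if_pos hkl, h2]
  · rw [if_neg (by simp; omega), if_neg hkl]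

lemma eterm_one (Q P : List Ω → Ω → ℝ) (hQ : ∀ pre, IsDist (Q pre)) (T : ℕ) (hT : 1 ≤ T) :
    seqExp eos (fun _ pre => Q pre) T (sLoss P Q 1) = tvd (P []) (Q []) := by
  rw [seqExp_congr_fn eos (fun _ pre => Q pre) T (fun y hy => sLoss_one P Q y hy)]
  rw [seqExp_const_mul eos _ T (tvd (P []) (Q [])) (fun _ => 1)]
  rw [seqExp_one eos T hT _ (fun _ pre => hQ pre), mul_one]

lemma eterm_succ (Q P : List Ω → Ω → ℝ) (T k : ℕ) (hT : 1 ≤ T) (hk : 1 ≤ k) :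
    seqExp eos (fun _ pre => Q pre) T (sLoss P Q (k + 1)) =
      ∑ c : Ω, Q [] c * (if c = eos then 0 else
        seqExp eos (fun _ pre => Q (c :: pre)) (T - 1)
          (sLoss (fun pre => P (c :: pre)) (fun pre => Q (c :: pre)) k)) := by
  rw [seqExp_rec eos _ T hT]
  refine Finset.sum_congr rfl fun c _ => ?_
  congr 1
  have h1 : sLoss P Q (k + 1) [c] = 0 := by
    unfold sLoss
    rw [if_neg (by simp; omega)]
  by_cases hc : c = eos
  · subst hc
    simp [h1]
  · rw [if_neg hc, if_neg hc]
    by_cases hT1 : T = 1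
    · rw [if_pos hT1, h1, hT1]
      rw [show (1:ℕ) - 1 = 0 from rfl, seqExp_zero]
    · rw [if_neg hT1]
      congr 1
      funext l
      exact sLoss_cons P Q k hk c l

lemma auxMain : ∀ (t : ℕ), 1 ≤ t → ∀ (T : ℕ), t ≤ T → ∀ (P Q : List Ω → Ω → ℝ),
    (∀ pre, IsDist (P pre)) → (∀ pre, IsDist (Q pre)) →
    ∀ (δ : List Ω → ℝ), (∀ y, |δ y| ≤ 1 / 2) → (∀ y : List Ω, y.length ≠ t → δ y = 0) →
    seqExp eos (fun j pre => if j = t - 1 then Q pre else P pre) t δ ≥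
      seqExp eos (fun _ pre => Q pre) t δ
        - ∑ k ∈ Finset.Icc 1 (t - 1), seqExp eos (fun _ pre => Q pre) T (sLoss P Q k) := by
  intro t ht
  induction t, ht using Nat.le_induction with
  | base =>
    intro T hT P Q hP hQ δ hδ1 hδ2
    have : seqExp eos (fun j pre => if j = 1 - 1 then Q pre else P pre) 1 δ =
        seqExp eos (fun _ pre => Q pre) 1 δ := by
      refine seqExp_congr eos 1 (fun j hj pre => ?_) δ
      interval_cases j
      simp
    rw [this]
    simp
  | succ t ht ih =>
    intro T hT P Q hP hQ δ hδ1 hδ2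
    have hT1 : 1 ≤ T := by omega
    -- abbreviations
    set A : Ω → ℝ := fun c => if c = eos then 0 else
      seqExp eos (fun j pre => if j = t - 1 then Q (c :: pre) else P (c :: pre)) t
        (fun l => δ (c :: l)) with hA
    set B : Ω → ℝ := fun c => if c = eos then 0 else
      seqExp eos (fun _ pre => Q (c :: pre)) t (fun l => δ (c :: l)) with hB
    set E : Ω → ℕ → ℝ := fun c k => if c = eos then 0 else
      seqExp eos (fun _ pre => Q (c :: pre)) (T - 1)
        (sLoss (fun pre => P (c :: pre)) (fun pre => Q (c :: pre)) k) with hE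
    have hδ0 : ∀ c : Ω, δ [c] = 0 := fun c => hδ2 [c] (by simp; omega)
    -- rewrite LHS
    have hLHS : seqExp eos (fun j pre => if j = t + 1 - 1 then Q pre else P pre) (t + 1) δ =
        ∑ c : Ω, P [] c * A c := by
      rw [seqExp_rec eos _ (t + 1) (by omega)]
      refine Finset.sum_congr rfl fun c _ => ?_
      congr 1
      · rw [if_neg (by omega : ¬ (0 : ℕ) = t + 1 - 1)]
      · rw [hA]
        by_cases hc : c = eos
        · simp [hc, hδ0]
        · simp only [if_neg hc, if_neg (show ¬ t + 1 = 1 by omega)]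
          simp only [Nat.add_sub_cancel]
          refine seqExp_congr eos t (fun j hj pre => ?_) _
          by_cases hjt : j = t - 1
          · rw [if_pos hjt, if_pos (by omega)]
          · rw [if_neg hjt, if_neg (by omega)]
    -- rewrite first term of RHS
    have hRHS : seqExp eos (fun _ pre => Q pre) (t + 1) δ = ∑ c : Ω, Q [] c * B c := by
      rw [seqExp_rec eos _ (t + 1) (by omega)]
      refine Finset.sum_congr rfl fun c _ => ?_
      congr 1
      rw [hB]
      by_cases hc : c = eos
      · simp [hc, hδ0]
      · simp only [if_neg hc, if_neg (show ¬ t + 1 = 1 by omega), Nat.add_sub_cancel]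
    -- per-c bounds
    have hAbound : ∀ c : Ω, |A c| ≤ 1 / 2 := by
      intro c
      by_cases hc : c = eos
      · simp [hA, hc]
      · simp only [hA, if_neg hc]
        refine seqExp_abs_le eos (1 / 2) (by norm_num) t _ (fun j pre => ?_) _
          (fun l => hδ1 (c :: l))
        by_cases hjt : j = t - 1
        · rw [if_pos hjt]; exact hQ _
        · rw [if_neg hjt]; exact hP _
    have hIH : ∀ c : Ω, A c - B c ≥ -∑ k ∈ Finset.Icc 1 (t - 1), E c k := by
      intro c
      by_cases hc : c = eos
      · simp [hA, hB, hE, hc]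
      · have := ih (T - 1) (by omega) (fun pre => P (c :: pre)) (fun pre => Q (c :: pre))
          (fun pre => hP _) (fun pre => hQ _) (fun l => δ (c :: l))
          (fun l => hδ1 (c :: l)) (fun l hl => hδ2 (c :: l) (by simp; omega))
        simp only [hA, hB, hE, if_neg hc]
        linarith [this]
    -- main chain
    have key : ∑ c : Ω, P [] c * A c - ∑ c : Ω, Q [] c * B c ≥
        -∑ k ∈ Finset.Icc 1 (t - 1), (∑ c : Ω, Q [] c * E c k) - tvd (P []) (Q []) := by
      have hsplit : ∑ c : Ω, P [] c * A c - ∑ c : Ω, Q [] c * B c =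
          (∑ c : Ω, Q [] c * (A c - B c)) + ∑ c : Ω, (P [] c - Q [] c) * A c := by
        rw [← Finset.sum_sub_distrib, ← Finset.sum_add_distrib]
        exact Finset.sum_congr rfl fun c _ => by ring
      rw [hsplit]
      have h1 : ∑ c : Ω, Q [] c * (A c - B c) ≥
          ∑ c : Ω, Q [] c * (-∑ k ∈ Finset.Icc 1 (t - 1), E c k) := by
        refine Finset.sum_le_sum fun c _ => ?_
        exact mul_le_mul_of_nonneg_left (hIH c) ((hQ []).1 c)
      have h2 : ∑ c : Ω, (P [] c - Q [] c) * A c ≥ -tvd (P []) (Q []) := by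
        unfold tvd
        rw [Finset.mul_sum, ← Finset.sum_neg_distrib]
        refine Finset.sum_le_sum fun c _ => ?_
        have := hAbound c
        have habs : |(P [] c - Q [] c) * A c| ≤ |P [] c - Q [] c| * (1 / 2) := by
          rw [abs_mul]
          exact mul_le_mul_of_nonneg_left (hAbound c) (abs_nonneg _)
        calc -(1 / 2 * |P [] c - Q [] c|) = -(|P [] c - Q [] c| * (1 / 2)) := by ring
          _ ≤ -|(P [] c - Q [] c) * A c| := by linarith
          _ ≤ (P [] c - Q [] c) * A c := neg_abs_le _
      have h3 : ∑ c : Ω, Q [] c * (-∑ k ∈ Finset.Icc 1 (t - 1), E c k) =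
          -∑ k ∈ Finset.Icc 1 (t - 1), (∑ c : Ω, Q [] c * E c k) := by
        simp only [mul_neg, Finset.mul_sum, Finset.sum_neg_distrib]
        rw [Finset.sum_comm]
      linarith [h1, h2, h3.symm.le]
    -- identify E sums with Eterm
    have hEterm : ∀ k ∈ Finset.Icc 1 (t - 1), ∑ c : Ω, Q [] c * E c k =
        seqExp eos (fun _ pre => Q pre) T (sLoss P Q (k + 1)) := by
      intro k hk
      rw [eterm_succ eos Q P T k hT1 (Finset.mem_Icc.mp hk).1]
    -- sum reindexing
    have hreindex : ∑ k ∈ Finset.Icc 1 (t + 1 - 1), seqExp eos (fun _ pre => Q pre) T (sLoss P Q k) =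
        tvd (P []) (Q []) +
          ∑ k ∈ Finset.Icc 1 (t - 1), seqExp eos (fun _ pre => Q pre) T (sLoss P Q (k + 1)) := by
      simp only [Nat.add_sub_cancel]
      rw [sum_Icc_one t (fun k => seqExp eos (fun _ pre => Q pre) T (sLoss P Q k))]
      obtain ⟨t', rfl⟩ : ∃ t', t = t' + 1 := ⟨t - 1, by omega⟩
      rw [Finset.sum_range_succ' (fun j => seqExp eos (fun _ pre => Q pre) T (sLoss P Q (1 + j))) t']
      rw [add_comm]
      congr 1
      · simp only [Nat.add_zero]
        exact eterm_one eos Q P hQ T hT1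
      · rw [sum_Icc_one (t' + 1 - 1) (fun k => seqExp eos (fun _ pre => Q pre) T (sLoss P Q (k + 1)))]
        simp only [Nat.add_sub_cancel]
        exact Finset.sum_congr rfl fun j _ => rfl
    rw [hLHS, hRHS, hreindex]
    rw [Finset.sum_congr rfl hEterm] at key
    linarith [key]

end Aux

/-- **DistillSpec, telescoping lower bound.** For `1 ≤ t ≤ T` and any
`δ : Ω^t → [−1/2,1/2]` (extended by `0` to sequences of length `≠ t`),
`E_{y∼M(x,∅,P^{t−1}Q)}[δ(y)] ≥ E_{y∼M(x,∅,Qᵗ)}[δ(y)] − Σ_{k=1}^{t−1} E_k(x)`. -/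
theorem mixExp_PQ_ge_Q_sub_sum
    {Ω ι : Type*} [Fintype Ω] [DecidableEq Ω] (eos : Ω)
    (T : ℕ) (hT : 1 ≤ T)
    (p q : ι → List Ω → Ω → ℝ) (hp : IsModel p) (hq : IsModel q)
    (x : ι) (t : ℕ) (ht1 : 1 ≤ t) (ht2 : t ≤ T)
    (δ : List Ω → ℝ)
    (hδ1 : ∀ y, δ y ∈ Set.Icc (-(1 / 2) : ℝ) (1 / 2))
    (hδ2 : ∀ y : List Ω, y.length ≠ t → δ y = 0) :
    mixExp eos p q x (List.replicate (t - 1) true ++ [false]) δ ≥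
      mixExp eos p q x (List.replicate t false) δ
        - ∑ k ∈ Finset.Icc 1 (t - 1), Eterm eos p q x T k := by
  have hδ1' : ∀ y, |δ y| ≤ 1 / 2 := fun y => abs_le.mpr ⟨(hδ1 y).1, (hδ1 y).2⟩
  have hlen1 : (List.replicate (t - 1) true ++ [false]).length = t := by simp; omega
  have h1 : mixExp eos p q x (List.replicate (t - 1) true ++ [false]) δ =
      seqExp eos (fun j pre => if j = t - 1 then q x pre else p x pre) t δ := by
    unfold mixExp
    rw [hlen1]
    refine seqExp_congr eos t (fun j hj pre => ?_) δ
    by_cases hjt : j = t - 1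
    · subst hjt
      rw [List.getD_append_right _ _ _ _ (by simp), if_pos rfl]
      simp
    · rw [List.getD_append _ _ _ _ (by simp; omega), if_neg hjt]
      rw [List.getD_eq_getElem _ _ (by simp; omega)]
      simp
  have h2 : mixExp eos p q x (List.replicate t false) δ =
      seqExp eos (fun _ pre => q x pre) t δ := by
    unfold mixExp
    rw [List.length_replicate]
    refine seqExp_congr eos t (fun j hj pre => ?_) δ
    rw [List.getD_eq_getElem _ _ (by simpa using hj)]
    simp
  have h3 : ∀ k, Eterm eos p q x T k =
      seqExp eos (fun _ pre => q x pre) T (sLoss (p x) (q x) k) := by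
    intro k
    unfold Eterm modelExp
    congr 1
  rw [h1, h2]
  have := auxMain eos t ht1 T ht2 (p x) (q x) (fun pre => hp x pre) (fun pre => hq x pre)
    δ hδ1' hδ2
  calc seqExp eos (fun j pre => if j = t - 1 then q x pre else p x pre) t δ
      ≥ seqExp eos (fun _ pre => q x pre) t δ
        - ∑ k ∈ Finset.Icc 1 (t - 1), seqExp eos (fun _ pre => q x pre) T (sLoss (p x) (q x) k) := this
    _ = seqExp eos (fun _ pre => q x pre) t δ - ∑ k ∈ Finset.Icc 1 (t - 1), Eterm eos p q x T k := by
        rw [Finset.sum_congr rfl fun k _ => (h3 k).symm]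
end

section
/- Let p and q be probability distributions on a finite set Ω with p ≠ q. Define the residual distribution p'(c) = max(0, p(c) − q(c)) / Σ_{z∈Ω} max(0, p(z) − q(z)). Then Σ_{z∈Ω} max(0, p(z) − q(z)) = D_TVD(p, q) > 0, and for every c ∈ Ω: min(p(c), q(c)) + D_TVD(p, q) · p'(c) = p(c). Consequently, the speculative sampling step — draw c ∼ q, accept it with probability min(1, p(c)/q(c)), and on rejection output a fresh sample from p' — produces a token whose distribution is exactly p. -/
open Finset

/-- **Correctness of the speculative sampling step.** For `p ≠ q`, with residual distribution
`p'(c) = max(0, p(c) − q(c)) / Σ_z max(0, p(z) − q(z))`: the normalizer equals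
`D_TVD(p, q) > 0`, and for every `c`, `min(p(c), q(c)) + D_TVD(p,q) · p'(c) = p(c)`.
Consequently, accepting a drafted token with acceptance mass `min(p(c), q(c))` and resampling
rejections (total mass `1 − Σ_z min(p(z), q(z))`) from `p'` outputs a token distributed
exactly as `p`. -/
theorem speculative_sampling_exact
    {Ω : Type*} [Fintype Ω] (p q : Ω → ℝ) (hp : IsDist p) (hq : IsDist q) (hne : p ≠ q) :
    (∑ z, max 0 (p z - q z)) = tvd p q ∧ 0 < tvd p q ∧
    (∀ c, min (p c) (q c)
        + tvd p q * (max 0 (p c - q c) / ∑ z, max 0 (p z - q z)) = p c) ∧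
    (∀ c, min (p c) (q c)
        + (1 - ∑ z, min (p z) (q z)) * (max 0 (p c - q c) / ∑ z, max 0 (p z - q z)) = p c) := by
  have hzero : ∑ z, (p z - q z) = 0 := by
    rw [Finset.sum_sub_distrib, hp.2, hq.2]; ring
  have hpt : ∀ z, max 0 (p z - q z) - max 0 (q z - p z) = p z - q z := by
    intro z
    rcases le_total (p z) (q z) with h | h
    · rw [max_eq_left (by linarith), max_eq_right (by linarith)]; ring
    · rw [max_eq_right (by linarith), max_eq_left (by linarith)]; ring
  have hST : ∑ z, max 0 (p z - q z) - ∑ z, max 0 (q z - p z) = 0 := by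
    rw [← Finset.sum_sub_distrib, Finset.sum_congr rfl (fun z _ => hpt z), hzero]
  have habs : ∀ z, |p z - q z| = max 0 (p z - q z) + max 0 (q z - p z) := by
    intro z
    rcases le_total (p z) (q z) with h | h
    · rw [abs_of_nonpos (by linarith), max_eq_left (sub_nonpos.mpr h),
        max_eq_right (sub_nonneg.mpr h)]
      ring
    · rw [abs_of_nonneg (by linarith), max_eq_right (sub_nonneg.mpr h),
        max_eq_left (sub_nonpos.mpr h)]
      ring
  have hS : ∑ z, max 0 (p z - q z) = tvd p q := by
    unfold tvd
    rw [Finset.sum_congr rfl (fun z _ => habs z), Finset.sum_add_distrib]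
    linarith
  have hpos : 0 < tvd p q := by
    have : ∃ c, p c ≠ q c := by
      by_contra h
      push_neg at h
      exact hne (funext h)
    obtain ⟨c, hc⟩ := this
    unfold tvd
    have : 0 < |p c - q c| := abs_pos.mpr (sub_ne_zero.mpr hc)
    have hle : |p c - q c| ≤ ∑ z, |p z - q z| :=
      Finset.single_le_sum (f := fun z => |p z - q z|) (fun z _ => abs_nonneg _)
        (Finset.mem_univ c)
    linarith
  have hSpos : 0 < ∑ z, max 0 (p z - q z) := hS ▸ hpos
  have key : ∀ c, min (p c) (q c) + max 0 (p c - q c) = p c := by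
    intro c
    rcases le_total (p c) (q c) with h | h
    · rw [min_eq_left h, max_eq_left (by linarith)]; ring
    · rw [min_eq_right h, max_eq_right (by linarith)]; ring
  have hmin : 1 - ∑ z, min (p z) (q z) = ∑ z, max 0 (p z - q z) := by
    rw [← hp.2, ← Finset.sum_sub_distrib]
    apply Finset.sum_congr rfl
    intro z _
    have := key z
    linarith
  refine ⟨hS, hpos, fun c => ?_, fun c => ?_⟩
  · rw [← hS, mul_div_assoc', mul_comm, mul_div_assoc,
      div_self hSpos.ne', mul_one, key]
  · rw [hmin, mul_div_assoc', mul_comm, mul_div_assoc,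
      div_self hSpos.ne', mul_one, key]
end

section
/- Let P and Q be probability distributions on a finite set Ω with Q(c) > 0 for every c ∈ Ω. Then lim_{β→0+} D_JSD[β](P‖Q) / β = D_KL(P‖Q). -/
/-!
Write `M_β = βP + (1-β)Q`. Then `D_JSD[β](P‖Q)/β = D_KL(P‖M_β) + (1-β)·D_KL(Q‖M_β)/β`.
Since `M_0 = Q` has no zeros, the first term tends to `D_KL(P‖Q)` by continuity of `D_KL(P‖·)`
at `Q`. The function `β ↦ D_KL(Q‖M_β)` vanishes at `0` with derivative `Σ_c (Q c - P c) = 0`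
there, so the second term tends to `0`.
-/

open Finset

/-- Kullback–Leibler divergence `D_KL(P‖Q) = Σ_c P(c) log(P(c)/Q(c))` on a finite set
(with the convention `0 · log 0 = 0`, automatic since `0 * x = 0` in `ℝ`). -/
noncomputable def klDivFin {Ω : Type*} [Fintype Ω] (P Q : Ω → ℝ) : ℝ :=
  ∑ c, P c * Real.log (P c / Q c)

/-- Generalized Jensen–Shannon divergence
`D_JSD[β](P‖Q) = β·D_KL(P ‖ βP + (1−β)Q) + (1−β)·D_KL(Q ‖ βP + (1−β)Q)`. -/
noncomputable def jsdFin {Ω : Type*} [Fintype Ω] (β : ℝ) (P Q : Ω → ℝ) : ℝ :=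
  β * klDivFin P (fun c => β * P c + (1 - β) * Q c)
    + (1 - β) * klDivFin Q (fun c => β * P c + (1 - β) * Q c)

open Filter Topology

noncomputable def mixture {Ω : Type*} (β : ℝ) (P Q : Ω → ℝ) : Ω → ℝ :=
  fun c => β * P c + (1 - β) * Q c

section Mixture

variable {Ω : Type*} (P Q : Ω → ℝ)

@[simp]
theorem mixture_zero : mixture 0 P Q = Q := by
  ext c
  simp [mixture]

theorem continuous_mixture : Continuous (fun β => mixture β P Q) := by
  unfold mixture
  fun_prop

theorem hasDerivAt_mixture_apply (c : Ω) (β : ℝ) :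
    HasDerivAt (fun β => mixture β P Q c) (P c - Q c) β := by
  have h := ((hasDerivAt_id β).mul_const (P c)).add
    (((hasDerivAt_const β (1 : ℝ)).sub (hasDerivAt_id β)).mul_const (Q c))
  exact h.congr_deriv (by ring)

end Mixture

section KL

variable {Ω : Type*} [Fintype Ω]

@[simp]
theorem klDivFin_self (Q : Ω → ℝ) : klDivFin Q Q = 0 := by
  simp [klDivFin]

theorem continuousAt_klDivFin_right (P : Ω → ℝ) {Q : Ω → ℝ} (hQ : ∀ c, Q c ≠ 0) :
    ContinuousAt (klDivFin P) Q := by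
  unfold klDivFin
  refine tendsto_finsetSum _ (fun c _ => ?_)
  by_cases hP : P c = 0
  · simp only [hP, zero_mul]
    exact continuousAt_const
  · exact continuousAt_const.mul
      ((continuousAt_const.div (continuous_apply c).continuousAt (hQ c)).log
        (div_ne_zero hP (hQ c)))

theorem hasDerivAt_klDivFin_mixture_zero (P : Ω → ℝ) {Q : Ω → ℝ} (hQ : ∀ c, Q c ≠ 0) :
    HasDerivAt (fun β => klDivFin Q (mixture β P Q)) (∑ c, (Q c - P c)) 0 := by
  refine HasDerivAt.fun_sum (fun c _ => ?_)
  have hM : mixture 0 P Q c ≠ 0 := by simpa using hQ c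
  have h := (((hasDerivAt_const (0 : ℝ) (Q c)).fun_div (hasDerivAt_mixture_apply P Q c 0) hM).log
    (div_ne_zero (hQ c) hM)).const_mul (Q c)
  refine h.congr_deriv ?_
  simp only [mixture_zero]
  field_simp [hQ c]
  ring

theorem tendsto_klDivFin_mixture_div {P Q : Ω → ℝ} (hQ : ∀ c, Q c ≠ 0)
    (hsum : ∑ c, P c = ∑ c, Q c) :
    Tendsto (fun β => klDivFin Q (mixture β P Q) / β) (𝓝[≠] 0) (𝓝 0) := by
  have h := hasDerivAt_klDivFin_mixture_zero P hQ
  rw [sum_sub_distrib, hsum, sub_self, hasDerivAt_iff_tendsto_slope] at h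
  refine h.congr (fun β => ?_)
  simp [slope, div_eq_inv_mul]

theorem jsdFin_div_eq (P Q : Ω → ℝ) {β : ℝ} (hβ : β ≠ 0) :
    jsdFin β P Q / β
      = klDivFin P (mixture β P Q) + (1 - β) * (klDivFin Q (mixture β P Q) / β) := by
  unfold jsdFin mixture
  field_simp

end KL

/-- **Small-`β` limit of the generalized Jensen–Shannon divergence:** if `Q(c) > 0` for
every `c`, then `lim_{β→0⁺} D_JSD[β](P‖Q) / β = D_KL(P‖Q)`. -/
theorem jsd_div_beta_tendsto_kl
    {Ω : Type*} [Fintype Ω] (P Q : Ω → ℝ) (hP : IsDist P) (hQ : IsDist Q)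
    (hQpos : ∀ c, 0 < Q c) :
    Filter.Tendsto (fun β : ℝ => jsdFin β P Q / β)
      (nhdsWithin 0 (Set.Ioi 0)) (nhds (klDivFin P Q)) := by
  have hQ0 : ∀ c, Q c ≠ 0 := fun c => (hQpos c).ne'
  have hfirst : Tendsto (fun β => klDivFin P (mixture β P Q)) (𝓝[>] 0) (𝓝 (klDivFin P Q)) :=
    ((continuousAt_klDivFin_right P hQ0).tendsto.comp
      ((continuous_mixture P Q).tendsto' 0 Q (mixture_zero P Q))).mono_left nhdsWithin_le_nhds
  have hsecond : Tendsto (fun β => (1 - β) * (klDivFin Q (mixture β P Q) / β)) (𝓝[>] 0)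
      (𝓝 0) := by
    have hlin : Tendsto (fun β : ℝ => 1 - β) (𝓝[>] 0) (𝓝 1) :=
      ((continuous_const.sub continuous_id).tendsto' 0 1 (sub_zero 1)).mono_left
        nhdsWithin_le_nhds
    simpa using hlin.mul ((tendsto_klDivFin_mixture_div hQ0 (hP.2.trans hQ.2.symm)).mono_left
      (nhdsGT_le_nhdsNE 0))
  have hlimit := hfirst.add hsecond
  rw [add_zero] at hlimit
  refine hlimit.congr' ?_
  filter_upwards [self_mem_nhdsWithin] with β hβ
  exact (jsdFin_div_eq P Q (ne_of_gt hβ)).symm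
end
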